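/- Let k ∈ ℕ and let U be a unitary operator on H of class C^k(A). Then for every m ∈ ℤ, U^m ∈ C^k(A). Moreover, setting C = ‖U‖_{C^k} := ( Σ_{j=0}^k ‖ad_A^j U‖^2 )^{1/2}, for all j ∈ {1,…,k} and all m ∈ ℤ with |m| ≥ j one has ‖ad_A^j(U^m)‖ ≤ C^j |m|^j. -/

import Mathlib

variable {H : Type} [NormedAddCommGroup H] [InnerProductSpace ℂ H] [CompleteSpace H]

/-- `C` is the bounded operator representing the commutator form
`F(φ,ψ) = ⟨Aφ, Bψ⟩ − ⟨φ, BAψ⟩` on `D(A) × D(A)`. -/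
def IsCommutatorOf (A : H →ₗ.[ℂ] H) (B C : H →L[ℂ] H) : Prop :=
  ∀ x y : A.domain,
    (inner ℂ (A x) (B (y : H)) : ℂ) - inner ℂ (x : H) (B (A y)) = inner ℂ (x : H) (C (y : H))

/-- `D` is a chain of iterated commutators for `B` of length `k`:  `D 0 = B` and
`D (j+1) = ad_A (D j)` for `j < k`; its existence means `B ∈ C^k(A)` and `ad_A^j B = D j`. -/
def IsAdChain (A : H →ₗ.[ℂ] H) (B : H →L[ℂ] H) (D : ℕ → H →L[ℂ] H) (k : ℕ) : Prop :=
  D 0 = B ∧ ∀ j < k, IsCommutatorOf A (D j) (D (j + 1))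

/-- `B` is of class `C^k(A)`. -/
def MemCk (A : H →ₗ.[ℂ] H) (B : H →L[ℂ] H) (k : ℕ) : Prop := ∃ D, IsAdChain A B D k

/-!
Because `A` is self-adjoint, a bounded `B'` with bounded commutator `C'` maps `D(A)` into `D(A)`
with `A B' y = B' A y + C' y`; this lets `A` be moved across products, so the commutator obeys
the Leibniz rule and `ad_A^j (B₁ B₂) = ∑_{a+b=j} (j choose a) ad_A^a B₁ ad_A^b B₂`. Iterating
along `U^(n+1) = U U^n` gives the iterated commutators of `U^n` (`powChain`), and
`ad_A (B*) = -(ad_A B)*` handles `U^(-n) = (U^n)*` with the same norms. As `‖U‖ = 1`, the norm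
`C` dominates `1` and every `‖ad_A^i U‖`, so `‖ad_A^i U‖ ≤ C^i`; the binomial theorem then gives
`‖ad_A^j (U^(n+1))‖ ≤ (C + C n)^j`. Density of `D(A)` makes iterated commutators unique, so the
bound applies to any chain for `U^m`.
-/

open Finset
open scoped InnerProductSpace

section

omit [CompleteSpace H]

variable {A : H →ₗ.[ℂ] H} {B C : H →L[ℂ] H}

lemma isCommutatorOf_zero : IsCommutatorOf A 0 0 := by
  intro x y
  simp

namespace IsCommutatorOf

lemma add {B' C' : H →L[ℂ] H} (h : IsCommutatorOf A B C) (h' : IsCommutatorOf A B' C') :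
    IsCommutatorOf A (B + B') (C + C') := by
  intro x y
  simp only [add_apply, inner_add_right]
  linear_combination h x y + h' x y

lemma smul (c : ℂ) (h : IsCommutatorOf A B C) : IsCommutatorOf A (c • B) (c • C) := by
  intro x y
  simp only [smul_apply, inner_smul_right]
  linear_combination c * h x y

lemma nsmul (n : ℕ) (h : IsCommutatorOf A B C) : IsCommutatorOf A (n • B) (n • C) := by
  simpa only [Nat.cast_smul_eq_nsmul] using h.smul (n : ℂ)

lemma unique (hA : Dense (A.domain : Set H)) {C' : H →L[ℂ] H} (h : IsCommutatorOf A B C)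
    (h' : IsCommutatorOf A B C') : C = C' := by
  have hdom : ∀ y : A.domain, C y = C' y := fun y =>
    Dense.eq_of_inner_right ℂ hA fun v hv => by rw [← h ⟨v, hv⟩ y, ← h' ⟨v, hv⟩ y]
  exact DFunLike.coe_injective <|
    Continuous.ext_on hA C.continuous C'.continuous fun v hv => hdom ⟨v, hv⟩

end IsCommutatorOf

lemma isCommutatorOf_sum {ι : Type*} {s : Finset ι} {B C : ι → H →L[ℂ] H}
    (h : ∀ i ∈ s, IsCommutatorOf A (B i) (C i)) :
    IsCommutatorOf A (∑ i ∈ s, B i) (∑ i ∈ s, C i) := by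
  classical
  induction s using Finset.induction with
  | empty => simpa using isCommutatorOf_zero
  | insert a s ha ih =>
    rw [sum_insert ha, sum_insert ha]
    exact (h a (mem_insert_self a s)).add (ih fun i hi => h i (mem_insert_of_mem hi))

noncomputable def leibnizChain (D₁ D₂ : ℕ → H →L[ℂ] H) (j : ℕ) : H →L[ℂ] H :=
  ∑ ab ∈ antidiagonal j, j.choose ab.1 • (D₁ ab.1 * D₂ ab.2)

noncomputable def powChain (D : ℕ → H →L[ℂ] H) : ℕ → ℕ → H →L[ℂ] H
  | 0 => fun j => if j = 0 then 1 else 0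
  | m + 1 => leibnizChain D (powChain D m)

lemma leibnizChain_succ (D₁ D₂ : ℕ → H →L[ℂ] H) (j : ℕ) :
    leibnizChain D₁ D₂ (j + 1) = ∑ ab ∈ antidiagonal j,
      j.choose ab.1 • (D₁ (ab.1 + 1) * D₂ ab.2 + D₁ ab.1 * D₂ (ab.2 + 1)) := by
  rw [leibnizChain, sum_antidiagonal_choose_succ_nsmul (fun a b => D₁ a * D₂ b), add_comm,
    ← sum_add_distrib]
  refine sum_congr rfl fun ab hab => ?_
  rw [smul_add, Nat.choose_symm_of_eq_add (mem_antidiagonal.mp hab).symm]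

namespace IsAdChain

variable {k : ℕ}

lemma unique (hA : Dense (A.domain : Set H)) {B : H →L[ℂ] H} {D D' : ℕ → H →L[ℂ] H}
    (hD : IsAdChain A B D k) (hD' : IsAdChain A B D' k) : ∀ j ≤ k, D j = D' j := by
  intro j
  induction j with
  | zero => exact fun _ => hD.1.trans hD'.1.symm
  | succ j ih =>
    intro hj
    exact (ih (by omega) ▸ hD.2 j hj).unique hA (hD'.2 j hj)

end IsAdChain

lemma norm_leibnizChain_le {D₁ D₂ : ℕ → H →L[ℂ] H} {x y : ℝ} {j : ℕ}
    (h₁ : ∀ i ≤ j, ‖D₁ i‖ ≤ x ^ i) (h₂ : ∀ i ≤ j, ‖D₂ i‖ ≤ y ^ i) :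
    ‖leibnizChain D₁ D₂ j‖ ≤ (x + y) ^ j := by
  rw [(Commute.all x y).add_pow' j, leibnizChain]
  refine (norm_sum_le _ _).trans (sum_le_sum fun ab hab => ?_)
  have hab : ab.1 + ab.2 = j := mem_antidiagonal.mp hab
  refine norm_nsmul_le.trans ?_
  rw [nsmul_eq_mul]
  gcongr
  exact (norm_mul_le _ _).trans <| mul_le_mul (h₁ _ (by omega)) (h₂ _ (by omega))
    (norm_nonneg _) ((norm_nonneg _).trans (h₁ _ (by omega)))

lemma norm_powChain_le {D : ℕ → H →L[ℂ] H} {C : ℝ} {k : ℕ} (hD : ∀ i ≤ k, ‖D i‖ ≤ C ^ i)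
    (m : ℕ) : ∀ j ≤ k, ‖powChain D m j‖ ≤ (C * m) ^ j := by
  induction m with
  | zero =>
    rintro (_ | j) -
    · show ‖(1 : H →L[ℂ] H)‖ ≤ (C * (0 : ℕ)) ^ 0
      rw [pow_zero]
      exact ContinuousLinearMap.norm_id_le
    · simp [powChain]
  | succ m ih =>
    intro j hj
    have hsum : C + C * m = C * (m + 1 : ℕ) := by push_cast; ring
    rw [← hsum]
    exact norm_leibnizChain_le (fun i hi => hD i (by omega)) (fun i hi => ih i (by omega))

end

section SelfAdjoint

variable {A : H →ₗ.[ℂ] H} {B C : H →L[ℂ] H} {k : ℕ}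

lemma IsSelfAdjoint.isFormalAdjoint_self (hA : IsSelfAdjoint A) : A.IsFormalAdjoint A := by
  have h := LinearPMap.adjoint_isFormalAdjoint hA.dense_domain
  rwa [LinearPMap.isSelfAdjoint_def.mp hA] at h

lemma IsSelfAdjoint.exists_mem_domain_of_inner_eq (hA : IsSelfAdjoint A) {v w : H}
    (h : ∀ x : A.domain, ⟪A x, v⟫_ℂ = ⟪(x : H), w⟫_ℂ) :
    ∃ hv : v ∈ A.domain, A ⟨v, hv⟩ = w := by
  have h' : ∀ x : A.domain, ⟪w, (x : H)⟫_ℂ = ⟪v, A x⟫_ℂ := fun x => by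
    rw [← inner_conj_symm, ← h x, inner_conj_symm]
  have key : ∃ hv : v ∈ A.adjoint.domain, A.adjoint ⟨v, hv⟩ = w :=
    ⟨LinearPMap.mem_adjoint_domain_of_exists v ⟨w, h'⟩,
      LinearPMap.adjoint_apply_eq hA.dense_domain _ h'⟩
  rwa [LinearPMap.isSelfAdjoint_def.mp hA] at key

namespace IsCommutatorOf

lemma exists_apply_mem_domain (hA : IsSelfAdjoint A) (h : IsCommutatorOf A B C) (y : A.domain) :
    ∃ hv : B y ∈ A.domain, A ⟨B y, hv⟩ = B (A y) + C y :=
  hA.exists_mem_domain_of_inner_eq fun x => by rw [inner_add_right, ← h x y]; ring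

lemma mul (hA : IsSelfAdjoint A) {B' C' : H →L[ℂ] H}
    (h : IsCommutatorOf A B C) (h' : IsCommutatorOf A B' C') :
    IsCommutatorOf A (B * B') (C * B' + B * C') := by
  intro x y
  obtain ⟨hv, hAv⟩ := h'.exists_apply_mem_domain hA y
  have hB := h x ⟨B' y, hv⟩
  simp only [mul_apply_eq_comp, add_apply] at hB ⊢
  rw [hAv, map_add, inner_add_right] at hB
  rw [inner_add_right]
  linear_combination hB

lemma star (h : IsCommutatorOf A B C) : IsCommutatorOf A (star B) (-star C) := by
  intro x y
  have hconj := congrArg (starRingEnd ℂ) (h y x)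
  simp only [map_sub, inner_conj_symm] at hconj
  simp only [neg_apply, inner_neg_right, ContinuousLinearMap.star_eq_adjoint,
    ContinuousLinearMap.adjoint_inner_right]
  linear_combination -hconj

end IsCommutatorOf

lemma isCommutatorOf_one (hA : IsSelfAdjoint A) : IsCommutatorOf A 1 0 := by
  intro x y
  simp [hA.isFormalAdjoint_self x y]

lemma isAdChain_one (hA : IsSelfAdjoint A) :
    IsAdChain A 1 (fun j => if j = 0 then 1 else 0) k := by
  refine ⟨rfl, fun j _ => ?_⟩
  rcases j with _ | j
  · simpa using isCommutatorOf_one hA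
  · simpa using isCommutatorOf_zero

noncomputable def starChain (D : ℕ → H →L[ℂ] H) (j : ℕ) : H →L[ℂ] H :=
  (-1 : ℂ) ^ j • star (D j)

namespace IsAdChain

lemma mul (hA : IsSelfAdjoint A) {B₁ B₂ : H →L[ℂ] H} {D₁ D₂ : ℕ → H →L[ℂ] H}
    (h₁ : IsAdChain A B₁ D₁ k) (h₂ : IsAdChain A B₂ D₂ k) :
    IsAdChain A (B₁ * B₂) (leibnizChain D₁ D₂) k := by
  refine ⟨by simp [leibnizChain, h₁.1, h₂.1], fun j hj => ?_⟩
  rw [leibnizChain_succ, leibnizChain]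
  refine isCommutatorOf_sum fun ab hab => ?_
  have hab : ab.1 + ab.2 = j := mem_antidiagonal.mp hab
  exact ((h₁.2 ab.1 (by omega)).mul hA (h₂.2 ab.2 (by omega))).nsmul _

lemma pow (hA : IsSelfAdjoint A) {B : H →L[ℂ] H} {D : ℕ → H →L[ℂ] H}
    (hB : IsAdChain A B D k) (m : ℕ) : IsAdChain A (B ^ m) (powChain D m) k := by
  induction m with
  | zero => simpa [powChain] using isAdChain_one hA
  | succ m ih => rw [pow_succ']; exact hB.mul hA ih

lemma star {B : H →L[ℂ] H} {D : ℕ → H →L[ℂ] H} (h : IsAdChain A B D k) :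
    IsAdChain A (star B) (starChain D) k := by
  refine ⟨by simp [starChain, h.1], fun j hj => ?_⟩
  convert (h.2 j hj).star.smul ((-1 : ℂ) ^ j) using 1 <;> simp [starChain, pow_succ]

lemma exists_zpow_unitary (hA : IsSelfAdjoint A) {U : unitary (H →L[ℂ] H)}
    {D : ℕ → H →L[ℂ] H} (hD : IsAdChain A (U : H →L[ℂ] H) D k) (m : ℤ) :
    ∃ P, IsAdChain A ((U ^ m : unitary (H →L[ℂ] H)) : H →L[ℂ] H) P k ∧
      ∀ j, ‖P j‖ = ‖powChain D m.natAbs j‖ := by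
  obtain ⟨n, rfl | rfl⟩ := Int.eq_nat_or_neg m
  · exact ⟨powChain D n, by simpa using hD.pow hA n, fun j => by simp⟩
  · refine ⟨starChain (powChain D n), ?_, fun j => by simp [starChain, norm_smul]⟩
    simpa [← Unitary.star_eq_inv, star_pow] using (hD.pow hA n).star

end IsAdChain

end SelfAdjoint

lemma norm_le_sqrt_sum_sq_pow_of_unitary {U : unitary (H →L[ℂ] H)} {D : ℕ → H →L[ℂ] H} {k : ℕ}
    (hD : D 0 = U) :
    ∀ i ≤ k, ‖D i‖ ≤ Real.sqrt (∑ i ∈ range (k + 1), ‖D i‖ ^ 2) ^ i := by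
  set C := Real.sqrt (∑ i ∈ range (k + 1), ‖D i‖ ^ 2)
  have hle : ∀ i ≤ k, ‖D i‖ ≤ C := fun i hi => by
    simpa using Real.abs_le_sqrt (single_le_sum (f := fun i => ‖D i‖ ^ 2)
      (fun _ _ => sq_nonneg _) (mem_range.mpr (Nat.lt_succ_of_le hi)))
  rcases subsingleton_or_nontrivial H with hH | hH
  · intro i _
    rw [Subsingleton.elim (D i) 0, norm_zero]
    exact pow_nonneg (Real.sqrt_nonneg _) i
  · have hD0 : ‖D 0‖ = 1 := hD ▸ CStarRing.norm_coe_unitary U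
    rintro (_ | i) hi
    · simp [hD0]
    · exact (hle _ hi).trans (le_self_pow₀ (hD0 ▸ hle 0 (Nat.zero_le k)) (Nat.succ_ne_zero i))

/-- If the unitary `U` is of class `C^k(A)` (with chain `D`, `ad_A^j U = D j`), then for
every `m ∈ ℤ` the power `U^m ∈ C^k(A)`, and with
`C = ‖U‖_{C^k} = (Σ_{j=0}^k ‖ad_A^j U‖²)^{1/2}`, for every chain `E` of iterated
commutators of `U^m` (so `ad_A^j (U^m) = E j`), every `j ∈ {1,…,k}` and every `m` with
`|m| ≥ j` one has `‖ad_A^j (U^m)‖ ≤ C^j |m|^j`. -/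
theorem stmt_11 (A : H →ₗ.[ℂ] H) (hA : IsSelfAdjoint A) (k : ℕ)
    (U : unitary (H →L[ℂ] H)) (D : ℕ → H →L[ℂ] H)
    (hD : IsAdChain A (U : H →L[ℂ] H) D k) :
    (∀ m : ℤ, MemCk A ((U ^ m : unitary (H →L[ℂ] H)) : H →L[ℂ] H) k) ∧
    (∀ m : ℤ, ∀ E : ℕ → H →L[ℂ] H,
      IsAdChain A ((U ^ m : unitary (H →L[ℂ] H)) : H →L[ℂ] H) E k →
      ∀ j, 1 ≤ j → j ≤ k → (j : ℤ) ≤ |m| →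
        ‖E j‖ ≤ (Real.sqrt (∑ i ∈ Finset.range (k + 1), ‖D i‖ ^ 2)) ^ j *
          (m.natAbs : ℝ) ^ j) := by
  refine ⟨fun m => ?_, fun m E hE j _ hjk _ => ?_⟩
  · obtain ⟨P, hP, -⟩ := hD.exists_zpow_unitary hA m
    exact ⟨P, hP⟩
  · obtain ⟨P, hP, hPnorm⟩ := hD.exists_zpow_unitary hA m
    rw [hE.unique hA.dense_domain hP j hjk, hPnorm, ← mul_pow]
    exact norm_powChain_le (norm_le_sqrt_sum_sq_pow_of_unitary hD.1) _ j hjk
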